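/- For all n ≥ 2, the total number of edges, summed over all vertical paths in all plane trees on n vertices, equals (2n-3)!/((n-2)!)^2. -/

import Mathlib

inductive PlaneTree : Type where
  | node : List PlaneTree → PlaneTree

namespace PlaneTree

mutual
def size : PlaneTree → ℕ
  | .node ts => 1 + sizeList ts
def sizeList : List PlaneTree → ℕ
  | [] => 0
  | t :: ts => size t + sizeList ts
end

mutual
def positions : PlaneTree → List (List ℕ)
  | .node ts => [] :: positionsList 0 ts
def positionsList : ℕ → List PlaneTree → List (List ℕ)
  | _, [] => []
  | i, t :: ts => (positions t).map (i :: ·) ++ positionsList (i+1) ts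
end

mutual
def leafPositions : PlaneTree → List (List ℕ)
  | .node [] => [[]]
  | .node (t :: ts) => leafList 0 (t :: ts)
def leafList : ℕ → List PlaneTree → List (List ℕ)
  | _, [] => []
  | i, t :: ts => (leafPositions t).map (i :: ·) ++ leafList (i+1) ts
end

def isPrefixB : List ℕ → List ℕ → Bool
  | [], _ => true
  | _ :: _, [] => false
  | a :: as, b :: bs => a == b && isPrefixB as bs

def lcpLen : List ℕ → List ℕ → ℕ
  | a :: as, b :: bs => if a = b then 1 + lcpLen as bs else 0
  | _, _ => 0

/-- number of edges on the path between two vertices given by positions -/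
def pathDist (p q : List ℕ) : ℕ :=
  (p.length - lcpLen p q) + (q.length - lcpLen p q)

/-- number of vertical paths (vertex, proper descendant) in a tree -/
def verticalPairs (T : PlaneTree) : ℕ :=
  ((positions T).map (fun q =>
    ((positions T).filter (fun p => p != q && isPrefixB p q)).length)).sum

/-- total number of edges over all vertical paths in a tree -/
def verticalEdges (T : PlaneTree) : ℕ :=
  ((positions T).map (fun q =>
    (((positions T).filter (fun p => p != q && isPrefixB p q)).map
      (fun p => q.length - p.length)).sum)).sum

/-- number of (unordered) paths between distinct vertices -/
def pathCount (T : PlaneTree) : ℕ := ((positions T).sublistsLen 2).length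

/-- Wiener index: sum of distances over unordered pairs of distinct vertices -/
def wiener (T : PlaneTree) : ℕ :=
  (((positions T).sublistsLen 2).map (fun l =>
    match l with
    | [p, q] => pathDist p q
    | _ => 0)).sum

end PlaneTree

/-!
Let `B = ∑ₘ #(forests of size m) Xᵐ`, so that `B = 1 + X B²`. Splitting off the first tree of a
forest shows that a tree statistic with series `T` has forest series `T B²`. The vertical-edge
total of `node L` is that of the subtrees plus the path length (sum of depths) of `node L`, which
in turn is the path length plus the size, summed over the subtrees. Hence the series `P` of path
lengths and `E` of vertical-edge totals satisfy linear equations over `B`; with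
`U = 1 - 2 X B`, a square root of `1 - 4 X`, they give `E U³ = X²`. Finally
`W = ∑ C(2m, m) Xᵐ = U⁻¹` satisfies `W' = 2 W³`, so the coefficient of `Xⁿ` in `E = X² W³` is
`(n - 1) C(2n - 2, n - 1) / 2 = (2n - 3)! / ((n - 2)!)²`.
-/

open PowerSeries

section CentralBinomSeries

variable (K : Type*)

noncomputable def centralBinomSeries [Semiring K] : K⟦X⟧ := mk fun n => (n.centralBinom : K)

variable [CommRing K]

lemma one_sub_four_X_mul_derivative_centralBinomSeries :
    (1 - 4 * X) * d⁄dX K (centralBinomSeries K) = 2 * centralBinomSeries K := by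
  rw [← map_ofNat C 4, ← map_ofNat C 2]
  ext (_ | n)
  · simp only [sub_mul, one_mul, map_sub, mul_assoc, coeff_C_mul, coeff_zero_X_mul,
      coeff_derivative, centralBinomSeries, coeff_mk]
    norm_num [Nat.centralBinom]
  · have h := congrArg (Nat.cast : ℕ → K) (Nat.succ_mul_centralBinom_succ (n + 1))
    simp only [sub_mul, one_mul, map_sub, mul_assoc, coeff_C_mul, coeff_succ_X_mul,
      coeff_derivative, centralBinomSeries, coeff_mk]
    push_cast at h ⊢
    linear_combination h

variable [IsAddTorsionFree K]

lemma centralBinomSeries_sq_mul_one_sub_four_X :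
    centralBinomSeries K ^ 2 * (1 - 4 * X) = 1 := by
  refine derivative.ext ?_ (by simp [centralBinomSeries, Nat.centralBinom])
  have h4 : d⁄dX K (4 : K⟦X⟧) = 0 := by exact_mod_cast (d⁄dX K).map_natCast 4
  simp only [Derivation.leibniz, Derivation.leibniz_pow, map_sub, derivative_one, derivative_X, h4,
    smul_eq_mul]
  linear_combination (2 * centralBinomSeries K) * one_sub_four_X_mul_derivative_centralBinomSeries K

lemma derivative_centralBinomSeries :
    d⁄dX K (centralBinomSeries K) = 2 * centralBinomSeries K ^ 3 := by
  linear_combination -(d⁄dX K (centralBinomSeries K)) * centralBinomSeries_sq_mul_one_sub_four_X K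
    + centralBinomSeries K ^ 2 * one_sub_four_X_mul_derivative_centralBinomSeries K

variable {K} in
lemma centralBinomSeries_mul_eq_one [IsDomain K] [CharZero K] {U : K⟦X⟧} (hU : U ^ 2 = 1 - 4 * X)
    (hU0 : constantCoeff U = 1) : centralBinomSeries K * U = 1 := by
  have h : (centralBinomSeries K * U - 1) * (centralBinomSeries K * U + 1) = 0 := by
    linear_combination centralBinomSeries K ^ 2 * hU + centralBinomSeries_sq_mul_one_sub_four_X K
  refine sub_eq_zero.1 ((mul_eq_zero.1 h).resolve_right fun h' => ?_)
  simpa [centralBinomSeries, hU0] using congrArg constantCoeff h'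

end CentralBinomSeries

lemma coeff_centralBinomSeries_pow_three (K : Type*) [Field K] [CharZero K] (m : ℕ) :
    coeff m (centralBinomSeries K ^ 3) = (2 * m + 1).factorial / (m.factorial : K) ^ 2 := by
  have h := congrArg (coeff m) (derivative_centralBinomSeries K)
  rw [two_mul, map_add, coeff_derivative, show coeff (m + 1) (centralBinomSeries K)
    = (m + 1).centralBinom from coeff_mk _ _] at h
  have hrec : ((m + 1 : ℕ) : K) * (m + 1).centralBinom = 2 * (2 * m + 1) * m.centralBinom := by
    exact_mod_cast Nat.succ_mul_centralBinom_succ m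
  have hcube : coeff m (centralBinomSeries K ^ 3) = (2 * m + 1 : K) * m.centralBinom := by
    push_cast at hrec
    linear_combination (-h + hrec) / 2
  rw [hcube, Nat.centralBinom_eq_two_mul_choose, Nat.cast_choose K (by omega),
    show 2 * m - m = m by omega, Nat.factorial_succ]
  push_cast
  field_simp

namespace PlaneTree

noncomputable instance : DecidableEq PlaneTree := Classical.decEq _

@[simp] lemma size_node (L : List PlaneTree) : size (node L) = 1 + sizeList L := by rw [size]
@[simp] lemma sizeList_nil : sizeList [] = 0 := by rw [sizeList]
@[simp] lemma sizeList_cons (t : PlaneTree) (L : List PlaneTree) :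
    sizeList (t :: L) = size t + sizeList L := by rw [sizeList]

lemma one_le_size (T : PlaneTree) : 1 ≤ size T := by
  cases T; simp

lemma sizeList_eq_sum (L : List PlaneTree) : sizeList L = (L.map size).sum := by
  induction L with
  | nil => simp
  | cons t L ih => simp [ih]

@[simp] lemma positions_node (L : List PlaneTree) :
    positions (node L) = [] :: positionsList 0 L := by rw [positions]
@[simp] lemma positionsList_nil (i : ℕ) : positionsList i [] = [] := by rw [positionsList]
@[simp] lemma positionsList_cons (i : ℕ) (t : PlaneTree) (L : List PlaneTree) :
    positionsList i (t :: L) = (positions t).map (i :: ·) ++ positionsList (i + 1) L := by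
  rw [positionsList]

mutual
lemma length_positions : ∀ T : PlaneTree, (positions T).length = size T
  | node L => by simp [length_positionsList 0 L]; omega
lemma length_positionsList : ∀ (i : ℕ) (L : List PlaneTree),
    (positionsList i L).length = sizeList L
  | _, [] => by simp
  | i, t :: L => by simp [length_positions t, length_positionsList (i + 1) L]
end

lemma exists_cons_of_mem_positionsList {i : ℕ} {L : List PlaneTree} {q : List ℕ}
    (hq : q ∈ positionsList i L) : ∃ j q', i ≤ j ∧ q = j :: q' := by
  induction L generalizing i with
  | nil => simp at hq
  | cons t L ih =>
    simp only [positionsList_cons, List.mem_append, List.mem_map] at hq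
    rcases hq with ⟨q', -, rfl⟩ | hq
    · exact ⟨i, q', le_rfl, rfl⟩
    · obtain ⟨j, q', hj, rfl⟩ := ih hq
      exact ⟨j, q', by omega, rfl⟩

def pathLength (T : PlaneTree) : ℕ := ((positions T).map List.length).sum

lemma sum_length_positionsList (i : ℕ) (L : List PlaneTree) :
    ((positionsList i L).map List.length).sum = (L.map fun t => pathLength t + size t).sum := by
  induction L generalizing i with
  | nil => simp
  | cons t L ih =>
    simp [ih, pathLength, List.sum_map_add, length_positions, Function.comp_def]

lemma pathLength_node (L : List PlaneTree) :
    pathLength (node L) = (L.map fun t => pathLength t + size t).sum := by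
  simp [pathLength, sum_length_positionsList]

def ancestorDistSum (P : List (List ℕ)) (q : List ℕ) : ℕ :=
  ((P.filter fun p => p != q && isPrefixB p q).map fun p => q.length - p.length).sum

def verticalSum (P : List (List ℕ)) : ℕ := (P.map (ancestorDistSum P)).sum

lemma verticalEdges_eq_verticalSum (T : PlaneTree) :
    verticalEdges T = verticalSum (positions T) := rfl

@[simp] lemma isPrefixB_nil (q : List ℕ) : isPrefixB [] q = true := by rw [isPrefixB]
@[simp] lemma isPrefixB_cons_nil (a : ℕ) (p : List ℕ) : isPrefixB (a :: p) [] = false := by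
  rw [isPrefixB]
@[simp] lemma isPrefixB_cons_cons (a b : ℕ) (p q : List ℕ) :
    isPrefixB (a :: p) (b :: q) = (a == b && isPrefixB p q) := by rw [isPrefixB]

lemma ancestorDistSum_append (A B : List (List ℕ)) (q : List ℕ) :
    ancestorDistSum (A ++ B) q = ancestorDistSum A q + ancestorDistSum B q := by
  simp [ancestorDistSum, List.filter_append]

lemma ancestorDistSum_eq_zero {P : List (List ℕ)} {q : List ℕ}
    (hP : ∀ p ∈ P, p ≠ q → isPrefixB p q = false) : ancestorDistSum P q = 0 := by
  rw [ancestorDistSum, List.filter_eq_nil_iff.2 fun p hp => ?_, List.map_nil, List.sum_nil]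
  by_cases h : p = q <;> simp [h, hP p hp]

lemma ancestorDistSum_nil_cons (P : List (List ℕ)) {q : List ℕ} (hq : q ≠ []) :
    ancestorDistSum ([] :: P) q = q.length + ancestorDistSum P q := by
  simp [ancestorDistSum, Ne.symm hq]

lemma verticalSum_map_cons (c : ℕ) (P : List (List ℕ)) :
    verticalSum (P.map (c :: ·)) = verticalSum P := by
  unfold verticalSum ancestorDistSum
  simp [List.filter_map, Function.comp_def, bne, List.cons_beq_cons]

lemma verticalSum_append {A B : List (List ℕ)}
    (hAB : ∀ p ∈ A, ∀ q ∈ B, isPrefixB p q = false ∧ isPrefixB q p = false) :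
    verticalSum (A ++ B) = verticalSum A + verticalSum B := by
  have hA : ∀ q ∈ A, ancestorDistSum (A ++ B) q = ancestorDistSum A q := fun q hq => by
    rw [ancestorDistSum_append, ancestorDistSum_eq_zero fun p hp _ => (hAB q hq p hp).2, add_zero]
  have hB : ∀ q ∈ B, ancestorDistSum (A ++ B) q = ancestorDistSum B q := fun q hq => by
    rw [ancestorDistSum_append, ancestorDistSum_eq_zero fun p hp _ => (hAB p hp q hq).1, zero_add]
  rw [verticalSum, List.map_append, List.sum_append, List.map_congr_left hA,
    List.map_congr_left hB, verticalSum, verticalSum]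

lemma verticalSum_nil_cons {P : List (List ℕ)} (hP : [] ∉ P) :
    verticalSum ([] :: P) = verticalSum P + (P.map List.length).sum := by
  have hroot : ancestorDistSum ([] :: P) [] = 0 :=
    ancestorDistSum_eq_zero fun p _ hp => by cases p <;> simp_all
  have hdesc : ∀ q ∈ P, ancestorDistSum ([] :: P) q = q.length + ancestorDistSum P q :=
    fun q hq => ancestorDistSum_nil_cons P fun h => hP (h ▸ hq)
  rw [verticalSum, List.map_cons, List.sum_cons, hroot, zero_add, List.map_congr_left hdesc,
    List.sum_map_add, verticalSum, add_comm]

lemma verticalSum_positionsList (i : ℕ) (L : List PlaneTree) :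
    verticalSum (positionsList i L) = (L.map verticalEdges).sum := by
  induction L generalizing i with
  | nil => simp [verticalSum]
  | cons t L ih =>
    rw [positionsList_cons, verticalSum_append, verticalSum_map_cons, ih,
      ← verticalEdges_eq_verticalSum, List.map_cons, List.sum_cons]
    intro p hp q hq
    obtain ⟨p, -, rfl⟩ := List.mem_map.1 hp
    obtain ⟨j, q, hij, rfl⟩ := exists_cons_of_mem_positionsList hq
    have : i ≠ j := by omega
    simp [this, this.symm]

lemma verticalEdges_node (L : List PlaneTree) :
    verticalEdges (node L) = (L.map verticalEdges).sum + pathLength (node L) := by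
  have hroot : [] ∉ positionsList 0 L := fun h => by
    obtain ⟨_, _, -, h⟩ := exists_cons_of_mem_positionsList h
    exact List.cons_ne_nil _ _ h.symm
  rw [verticalEdges_eq_verticalSum, positions_node, verticalSum_nil_cons hroot,
    verticalSum_positionsList, pathLength_node, sum_length_positionsList]

open Finset

noncomputable def forests : ℕ → Finset (List PlaneTree)
  | 0 => {[]}
  | m + 1 => (antidiagonal m).attach.biUnion fun p =>
      (forests p.1.1 ×ˢ forests p.1.2).image fun x => node x.1 :: x.2
decreasing_by all_goals have := mem_antidiagonal.1 p.2; omega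

lemma mem_forests {m : ℕ} {L : List PlaneTree} : L ∈ forests m ↔ sizeList L = m := by
  induction m using Nat.strong_induction_on generalizing L with
  | _ m ih =>
    match m, L with
    | 0, [] => simp [forests]
    | 0, t :: L => simp [forests]; have := one_le_size t; omega
    | m + 1, [] => simp [forests]
    | m + 1, node M :: L =>
      simp only [forests, mem_biUnion, mem_attach, mem_image, mem_product, true_and,
        List.cons.injEq, node.injEq, sizeList_cons, size_node]
      constructor
      · rintro ⟨⟨⟨i, j⟩, hij⟩, ⟨M', L'⟩, ⟨hM, hL⟩, rfl, rfl⟩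
        simp only [HasAntidiagonal.mem_antidiagonal] at hij
        have := (ih i (by omega)).1 hM
        have := (ih j (by omega)).1 hL
        omega
      · intro h
        exact ⟨⟨(sizeList M, sizeList L), by simp; omega⟩, (M, L),
          ⟨(ih (sizeList M) (by omega)).2 rfl, (ih (sizeList L) (by omega)).2 rfl⟩, rfl, rfl⟩

lemma sum_forests_succ {β : Type*} [AddCommMonoid β] (f : List PlaneTree → β) (m : ℕ) :
    ∑ L ∈ forests (m + 1), f L
      = ∑ p ∈ antidiagonal m, ∑ M ∈ forests p.1, ∑ L ∈ forests p.2, f (node M :: L) := by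
  rw [forests, sum_biUnion, ← sum_attach (antidiagonal m)]
  · refine sum_congr rfl fun p _ => ?_
    rw [sum_image fun x _ y _ h => by simpa [Prod.ext_iff] using h, sum_product]
  · rintro p - q - hpq
    refine disjoint_left.2 fun L hp hq => hpq ?_
    simp only [mem_image, mem_product] at hp hq
    obtain ⟨⟨M, L⟩, ⟨hM, hL⟩, rfl⟩ := hp
    obtain ⟨⟨M', L'⟩, ⟨hM', hL'⟩, h⟩ := hq
    simp only [List.cons.injEq, node.injEq] at h
    obtain ⟨rfl, rfl⟩ := h
    rw [mem_forests] at hM hL hM' hL'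
    exact Subtype.ext (Prod.ext (hM.symm.trans hM') (hL.symm.trans hL'))

noncomputable def trees : ℕ → Finset PlaneTree
  | 0 => ∅
  | n + 1 => (forests n).image node

lemma mem_trees {n : ℕ} {T : PlaneTree} : T ∈ trees n ↔ size T = n := by
  cases T with
  | node L =>
    cases n <;> simp [trees, mem_forests]
    omega

@[simp] lemma trees_zero : trees 0 = ∅ := rfl

lemma sum_trees_succ {β : Type*} [AddCommMonoid β] (f : PlaneTree → β) (n : ℕ) :
    ∑ T ∈ trees (n + 1), f T = ∑ M ∈ forests n, f (node M) :=
  sum_image fun _ _ _ _ h => node.inj h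

lemma finsum_size_eq_sum_trees {β : Type*} [AddCommMonoid β] (f : PlaneTree → β) (n : ℕ) :
    ∑ᶠ T : {T : PlaneTree // T.size = n}, f T = ∑ T ∈ trees n, f T := by
  rw [finsum_subtype_eq_finsum_cond, ← finsum_mem_coe_finset]
  exact finsum_congr fun T => by simp [mem_trees]

noncomputable def forestCount : ℚ⟦X⟧ := mk fun m => ((forests m).card : ℚ)

noncomputable def treeSeries (σ : PlaneTree → ℚ) : ℚ⟦X⟧ := mk fun n => ∑ T ∈ trees n, σ T

noncomputable def forestSeries (σ : PlaneTree → ℚ) : ℚ⟦X⟧ :=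
  mk fun m => ∑ L ∈ forests m, (L.map σ).sum

lemma forestCount_eq : forestCount = 1 + X * forestCount ^ 2 := by
  ext (_ | m)
  · simp [forestCount, forests]
  · rw [map_add, coeff_succ_X_mul, sq, coeff_mul, coeff_one, if_neg m.succ_ne_zero, zero_add]
    simp only [forestCount, coeff_mk]
    rw [card_eq_sum_ones, sum_forests_succ]
    simp

lemma forestSeries_eq_treeSeries_mul_add (σ : PlaneTree → ℚ) :
    forestSeries σ = treeSeries σ * forestCount + X * (forestCount * forestSeries σ) := by
  ext (_ | m)
  · simp [forestSeries, treeSeries, forests]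
  · rw [map_add, coeff_succ_X_mul, coeff_mul, coeff_mul, Nat.sum_antidiagonal_succ]
    simp only [forestSeries, treeSeries, forestCount, coeff_mk, sum_forests_succ, trees_zero,
      sum_empty, zero_mul, zero_add, ← sum_add_distrib, sum_trees_succ]
    refine sum_congr rfl fun p _ => ?_
    simp [sum_add_distrib, mul_sum, mul_comm]

lemma forestSeries_eq_treeSeries_mul_sq (σ : PlaneTree → ℚ) :
    forestSeries σ = treeSeries σ * forestCount ^ 2 := by
  linear_combination
    forestCount * forestSeries_eq_treeSeries_mul_add σ - forestSeries σ * forestCount_eq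

lemma forestSeries_add (σ τ : PlaneTree → ℚ) :
    forestSeries (fun t => σ t + τ t) = forestSeries σ + forestSeries τ := by
  ext m
  simp [forestSeries, List.sum_map_add, sum_add_distrib]

lemma forestSeries_size : forestSeries (fun t => (size t : ℚ)) = X * d⁄dX ℚ forestCount := by
  ext (_ | m)
  · simp [forestSeries, forests]
  · rw [coeff_succ_X_mul, coeff_derivative]
    have hsize : ∀ L ∈ forests (m + 1), (L.map fun t => (size t : ℚ)).sum = m + 1 := by
      intro L hL
      have := congrArg (Nat.cast : ℕ → ℚ) (mem_forests.1 hL)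
      simpa [sizeList_eq_sum, Nat.cast_list_sum, Function.comp_def] using this
    simp [forestSeries, forestCount, sum_congr rfl hsize]
    ring

lemma treeSeries_eq_X_mul_forestSeries {σ τ : PlaneTree → ℚ}
    (h : ∀ L, σ (node L) = (L.map τ).sum) : treeSeries σ = X * forestSeries τ := by
  ext (_ | m)
  · simp [treeSeries]
  · simp [treeSeries, forestSeries, coeff_succ_X_mul, sum_trees_succ, h]

lemma treeSeries_pathLength_eq :
    treeSeries (fun t => (pathLength t : ℚ)) = X * (treeSeries (fun t => (pathLength t : ℚ))
      * forestCount ^ 2 + X * d⁄dX ℚ forestCount) := by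
  have h := treeSeries_eq_X_mul_forestSeries (σ := fun t => (pathLength t : ℚ))
    (τ := fun t => (pathLength t : ℚ) + size t) fun L => by
      simp [pathLength_node, Nat.cast_list_sum, Function.comp_def]
  rwa [forestSeries_add, forestSeries_eq_treeSeries_mul_sq, forestSeries_size] at h

lemma treeSeries_verticalEdges_eq :
    treeSeries (fun t => (verticalEdges t : ℚ)) = X * (treeSeries (fun t => (verticalEdges t : ℚ))
      * forestCount ^ 2 + treeSeries (fun t => (pathLength t : ℚ)) * forestCount ^ 2
      + X * d⁄dX ℚ forestCount) := by
  have h := treeSeries_eq_X_mul_forestSeries (σ := fun t => (verticalEdges t : ℚ))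
    (τ := fun t => (verticalEdges t : ℚ) + ((pathLength t : ℚ) + size t)) fun L => by
      simp [verticalEdges_node, pathLength_node, Nat.cast_list_sum, Function.comp_def,
        List.sum_map_add]
  rwa [forestSeries_add, forestSeries_add, forestSeries_eq_treeSeries_mul_sq,
    forestSeries_eq_treeSeries_mul_sq, forestSeries_size, ← add_assoc] at h

lemma derivative_forestCount :
    d⁄dX ℚ forestCount * (1 - 2 * X * forestCount) = forestCount ^ 2 := by
  have h := congrArg (d⁄dX ℚ) forestCount_eq
  simp only [map_add, derivative_one, Derivation.leibniz, Derivation.leibniz_pow, derivative_X,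
    smul_eq_mul] at h
  linear_combination h

lemma forestCount_ne_zero : forestCount ≠ 0 := fun h => by
  simpa [forestCount, forests] using congrArg (coeff 0) h

lemma treeSeries_verticalEdges_mul_cube :
    treeSeries (fun t => (verticalEdges t : ℚ)) * (1 - 2 * X * forestCount) ^ 3 = X ^ 2 := by
  set B := forestCount
  set P := treeSeries (fun t => (pathLength t : ℚ))
  set E := treeSeries (fun t => (verticalEdges t : ℚ))
  -- `1 - X B² = B (1 - 2 X B)` by `forestCount_eq`
  have hE : E * (B * (1 - 2 * X * B)) = P := by
    linear_combination treeSeries_verticalEdges_eq - treeSeries_pathLength_eq + E * forestCount_eq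
  have hP : P * (B * (1 - 2 * X * B)) = X ^ 2 * d⁄dX ℚ B := by
    linear_combination treeSeries_pathLength_eq + P * forestCount_eq
  have hP' : P * (1 - 2 * X * B) ^ 2 = X ^ 2 * B := mul_left_cancel₀ forestCount_ne_zero <| by
    linear_combination (1 - 2 * X * B) * hP + X ^ 2 * derivative_forestCount
  exact mul_left_cancel₀ forestCount_ne_zero <| by
    linear_combination (1 - 2 * X * B) ^ 2 * hE + hP'

lemma treeSeries_verticalEdges_eq_X_sq_mul :
    treeSeries (fun t => (verticalEdges t : ℚ)) = X ^ 2 * centralBinomSeries ℚ ^ 3 := by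
  set U := 1 - 2 * X * forestCount
  have hWU : centralBinomSeries ℚ * U = 1 :=
    centralBinomSeries_mul_eq_one (by linear_combination (-4 * X) * forestCount_eq) (by simp [U])
  linear_combination centralBinomSeries ℚ ^ 3 * treeSeries_verticalEdges_mul_cube
    - treeSeries (fun t => (verticalEdges t : ℚ))
      * ((centralBinomSeries ℚ * U) ^ 2 + centralBinomSeries ℚ * U + 1) * hWU

end PlaneTree

theorem total_vertical_path_edges_plane_trees (n : ℕ) (hn : 2 ≤ n) :
    (∑ᶠ T : {T : PlaneTree // T.size = n}, (T.1.verticalEdges : ℚ))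
      = (Nat.factorial (2 * n - 3) : ℚ) / ((Nat.factorial (n - 2) : ℚ)) ^ 2 := by
  open PlaneTree in
  obtain ⟨m, rfl⟩ := Nat.exists_eq_add_of_le' hn
  calc ∑ᶠ T : {T : PlaneTree // T.size = m + 2}, (T.1.verticalEdges : ℚ)
      = coeff (m + 2) (treeSeries fun t => (verticalEdges t : ℚ)) := by
        rw [finsum_size_eq_sum_trees (fun t => (verticalEdges t : ℚ)), treeSeries, coeff_mk]
    _ = coeff m (centralBinomSeries ℚ ^ 3) := by
        rw [treeSeries_verticalEdges_eq_X_sq_mul, coeff_X_pow_mul]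
    _ = _ := by
        rw [coeff_centralBinomSeries_pow_three, show 2 * (m + 2) - 3 = 2 * m + 1 by omega,
          Nat.add_sub_cancel]
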